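/- For every formula φ of basic multi-agent modal logic there is a formula φ' of basic modal logic such that ⟨↑⟩φ ↔ φ' is valid, where ⟨↑⟩ is the arbitrary arrow update quantifier. -/

import Mathlib

namespace AAUML

/-- Formulas of arbitrary arrow update model logic over atoms `P` and agents `A`.
An arrow update model is encoded as a finite list of arrows
`(agent, source outcome, source condition, target outcome, target condition)`,
with outcomes drawn from `ℕ`; `upd U o φ` is `[U,o]φ` and `all φ` is `[↑]φ`. -/
inductive Form (P A : Type) : Type where
  | atom : P → Form P A
  | neg  : Form P A → Form P A
  | and  : Form P A → Form P A → Form P A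
  | box  : A → Form P A → Form P A
  | upd  : List (A × ℕ × Form P A × ℕ × Form P A) → ℕ → Form P A → Form P A
  | all  : Form P A → Form P A

/-- An arrow: agent, source outcome, source condition, target outcome, target condition. -/
abbrev Arrow (P A : Type) := A × ℕ × Form P A × ℕ × Form P A

/-- Formulas of basic multi-agent modal logic: no update modality, no quantifier. -/
inductive Form.Modal {P A : Type} : Form P A → Prop
  | atom (p : P) : Form.Modal (.atom p)
  | neg {φ : Form P A} : Form.Modal φ → Form.Modal (.neg φ)
  | and {φ ψ : Form P A} : Form.Modal φ → Form.Modal ψ → Form.Modal (.and φ ψ)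
  | box (a : A) {φ : Form P A} : Form.Modal φ → Form.Modal (.box a φ)

/-- Formulas of arrow update model logic (no arbitrary-update quantifier anywhere,
including inside the conditions of arrow update models). -/
inductive Form.NoQuant {P A : Type} : Form P A → Prop
  | atom (p : P) : Form.NoQuant (.atom p)
  | neg {φ : Form P A} : Form.NoQuant φ → Form.NoQuant (.neg φ)
  | and {φ ψ : Form P A} : Form.NoQuant φ → Form.NoQuant ψ → Form.NoQuant (.and φ ψ)
  | box (a : A) {φ : Form P A} : Form.NoQuant φ → Form.NoQuant (.box a φ)
  | upd {U : List (Arrow P A)} (o : ℕ) {φ : Form P A} : Form.NoQuant φ →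
      (∀ ar ∈ U, Form.NoQuant ar.2.2.1) → (∀ ar ∈ U, Form.NoQuant ar.2.2.2.2) →
      Form.NoQuant (.upd U o φ)

/-- Propositional formulas (no modalities at all). -/
inductive Form.Prp {P A : Type} : Form P A → Prop
  | atom (p : P) : Form.Prp (.atom p)
  | neg {φ : Form P A} : Form.Prp φ → Form.Prp (.neg φ)
  | and {φ ψ : Form P A} : Form.Prp φ → Form.Prp ψ → Form.Prp (.and φ ψ)

/-- A relational (Kripke) model. -/
structure KModel (P A : Type) : Type 1 where
  World : Type
  R : A → World → World → Prop
  V : World → P → Prop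

variable {P A : Type}

/-- Satisfaction for basic modal formulas (junk value `False` on updates/quantifiers;
only used on modal formulas). -/
def msat (M : KModel P A) : M.World → Form P A → Prop
  | s, .atom p => M.V s p
  | s, .neg φ => ¬ msat M s φ
  | s, .and φ ψ => msat M s φ ∧ msat M s ψ
  | s, .box a φ => ∀ t, M.R a s t → msat M t φ
  | _, .upd _ _ _ => False
  | _, .all _ => False

/-- Some arrow of `U` for agent `a` from outcome `o` to outcome `o'` has its (modal)
source condition true at `s` and its target condition true at `s'`. -/
def marrowOK (M : KModel P A) (U : List (Arrow P A)) (a : A) (o o' : ℕ)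
    (s s' : M.World) : Prop :=
  ∃ ψ ψ', (a, o, ψ, o', ψ') ∈ U ∧ msat M s ψ ∧ msat M s' ψ'

/-- All source and target conditions of `U` are basic modal formulas. -/
def ModalArrows (U : List (Arrow P A)) : Prop :=
  ∀ ar ∈ U, Form.Modal ar.2.2.1 ∧ Form.Modal ar.2.2.2.2

mutual
  /-- Satisfaction `M,s ⊨ φ`.  The case `upd U o φ` is interpreted in the product
  model `M*U` (inlined); `all φ` quantifies over all arrow update models with basic
  modal source and target conditions. -/
  def Form.sat : (M : KModel P A) → M.World → Form P A → Prop
    | M, s, .atom p => M.V s p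
    | M, s, .neg φ => ¬ Form.sat M s φ
    | M, s, .and φ ψ => Form.sat M s φ ∧ Form.sat M s ψ
    | M, s, .box a φ => ∀ t, M.R a s t → Form.sat M t φ
    | M, s, .upd U o φ =>
        Form.sat ⟨M.World × ℕ,
          fun a x y => M.R a x.1 y.1 ∧ satList M U a x.2 y.2 x.1 y.1,
          fun x p => M.V x.1 p⟩ (s, o) φ
    | M, s, .all φ => ∀ (U : List (Arrow P A)) (o : ℕ), ModalArrows U →
        Form.sat ⟨M.World × ℕ,
          fun a x y => M.R a x.1 y.1 ∧ marrowOK M U a x.2 y.2 x.1 y.1,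
          fun x p => M.V x.1 p⟩ (s, o) φ
  termination_by M s φ => sizeOf φ

  /-- Some arrow of the list, for agent `a`, from `o` to `o'`, has its source condition
  true at `s` and its target condition true at `s'`. -/
  def satList : (M : KModel P A) → List (Arrow P A) → A → ℕ → ℕ → M.World → M.World → Prop
    | _, [], _, _, _, _, _ => False
    | M, (b, o1, ψ, o2, ψ') :: rest, a, o, o', s, s' =>
        (b = a ∧ o1 = o ∧ o2 = o' ∧ Form.sat M s ψ ∧ Form.sat M s' ψ') ∨
        satList M rest a o o' s s'
  termination_by M U a o o' s s' => sizeOf U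
end

/-- The product `M*U` of a relational model and an arrow update model. -/
def prodModel (M : KModel P A) (U : List (Arrow P A)) : KModel P A :=
  ⟨M.World × ℕ,
   fun a x y => M.R a x.1 y.1 ∧ satList M U a x.2 y.2 x.1 y.1,
   fun x p => M.V x.1 p⟩

def Valid (φ : Form P A) : Prop := ∀ (M : KModel P A) (s : M.World), Form.sat M s φ

def Form.or (φ ψ : Form P A) : Form P A := .neg (.and (.neg φ) (.neg ψ))
def Form.imp (φ ψ : Form P A) : Form P A := .neg (.and φ (.neg ψ))
def Form.dia (a : A) (φ : Form P A) : Form P A := .neg (.box a (.neg φ))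
/-- `⟨U,o⟩φ` -/
def Form.diaUpd (U : List (Arrow P A)) (o : ℕ) (φ : Form P A) : Form P A :=
  .neg (.upd U o (.neg φ))
/-- `⟨↑⟩φ` -/
def Form.ex (φ : Form P A) : Form P A := .neg (.all (.neg φ))
/-- A canonical tautology. -/
def Form.top [Inhabited P] : Form P A := .neg (.and (.atom default) (.neg (.atom default)))
/-- Finite conjunction. -/
def Form.conj [Inhabited P] : List (Form P A) → Form P A
  | [] => Form.top
  | φ :: rest => .and φ (Form.conj rest)

/-- `Z` is a bisimulation between `M` and `N`. -/
def IsBisim (M N : KModel P A) (Z : M.World → N.World → Prop) : Prop :=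
  ∀ s s', Z s s' →
    (∀ p, M.V s p ↔ N.V s' p) ∧
    (∀ a t, M.R a s t → ∃ t', N.R a s' t' ∧ Z t t') ∧
    (∀ a t', N.R a s' t' → ∃ t, M.R a s t ∧ Z t t')

/-- Bisimilarity of pointed models. -/
def Bisimilar (M : KModel P A) (s : M.World) (N : KModel P A) (s' : N.World) : Prop :=
  ∃ Z, IsBisim M N Z ∧ Z s s'

/-- An action model: actions with accessibility relations and preconditions. -/
structure AModel (P A : Type) : Type 1 where
  Action : Type
  rel : A → Action → Action → Prop
  pre : Action → Form P A

/-- The restricted modal product `M ⊗ E`. -/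
def actProd (M : KModel P A) (E : AModel P A) : KModel P A :=
  ⟨{x : M.World × E.Action // Form.sat M x.1 (E.pre x.2)},
   fun a x y => M.R a x.1.1 y.1.1 ∧ E.rel a x.1.2 y.1.2,
   fun x p => M.V x.1.1 p⟩

/-- `M,s ⊨ [E,e]φ`: if the precondition of `e` holds at `s` then `φ` holds at `(s,e)`
in `M ⊗ E`. -/
def actSat (M : KModel P A) (E : AModel P A) (s : M.World) (e : E.Action)
    (φ : Form P A) : Prop :=
  ∀ h : Form.sat M s (E.pre e), Form.sat (actProd M E) ⟨(s, e), h⟩ φ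


/-!
Modal truth is invariant under bisimulation, and truth of a modal formula at `(t, o)` after a
fixed arrow update `U` is expressed at `t` by a modal formula (`updReduct`). A modal formula of
depth `n` is a disjunction of cubes `π ∧ ⋀ ◇_a φ ∧ ⋀ □_a ψ` with propositional `π` and components
of depth `< n`. The quantifier `⟨↑⟩` commutes with the disjunction and with `π`, and
`⟨↑⟩(⋀ ◇_a φ ∧ ⋀ □_a ψ_a) ↔ ⋀ ◇_a ⟨↑⟩(φ ∧ ψ_a)`: for the hard direction the updates witnessing the
conjuncts at the chosen successors are laid side by side on disjoint outcomes below a fresh root,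
whose `a`-arrows lead exactly to the worlds where the corresponding update makes `φ ∧ ψ_a` true.
Induction on modal depth finishes the proof.
-/

theorem Form.Modal.nonempty {φ : Form P A} (h : φ.Modal) : Nonempty P := by
  induction h with
  | atom p => exact ⟨p⟩
  | neg _ ih | and _ _ ih _ | box _ _ ih => exact ih

theorem sat_iff_msat {φ : Form P A} (h : φ.Modal) (M : KModel P A) (s : M.World) :
    Form.sat M s φ ↔ msat M s φ := by
  induction h generalizing s with
  | atom p => simp [Form.sat, msat]
  | neg _ ih => simp [Form.sat, msat, ih]
  | and _ _ ih₁ ih₂ => simp [Form.sat, msat, ih₁, ih₂]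
  | box a _ ih => simp [Form.sat, msat, ih]

theorem msat_iff_of_isBisim {M N : KModel P A} {Z : M.World → N.World → Prop}
    (hZ : IsBisim M N Z) {φ : Form P A} (hφ : φ.Modal) {s : M.World} {s' : N.World}
    (hs : Z s s') : msat M s φ ↔ msat N s' φ := by
  induction hφ generalizing s s' with
  | atom p => exact (hZ s s' hs).1 p
  | neg _ ih => exact not_congr (ih hs)
  | and _ _ ih₁ ih₂ => exact and_congr (ih₁ hs) (ih₂ hs)
  | box a _ ih =>
    obtain ⟨-, forth, back⟩ := hZ s s' hs
    constructor
    · intro H t' ht'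
      obtain ⟨t, ht, hZt⟩ := back a t' ht'
      exact (ih hZt).1 (H t ht)
    · intro H t ht
      obtain ⟨t', ht', hZt⟩ := forth a t ht
      exact (ih hZt).2 (H t' ht')

/-- The product `M * U` as `Form.all` sees it: arrow conditions are evaluated with `msat`. -/
def mprod (M : KModel P A) (U : List (Arrow P A)) : KModel P A :=
  ⟨M.World × ℕ, fun a x y => M.R a x.1 y.1 ∧ marrowOK M U a x.2 y.2 x.1 y.1,
   fun x p => M.V x.1 p⟩

def ExSat (M : KModel P A) (s : M.World) (φ : Form P A) : Prop :=
  ∃ U o, ModalArrows U ∧ msat (mprod M U) (s, o) φ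

theorem sat_ex_iff {φ : Form P A} (h : φ.Modal) (M : KModel P A) (s : M.World) :
    Form.sat M s (Form.ex φ) ↔ ExSat M s φ := by
  simp only [Form.ex, Form.sat, not_forall, not_not, ExSat, exists_prop]
  exact exists₂_congr fun U o => and_congr_right fun _ => sat_iff_msat h (mprod M U) (s, o)

theorem msat_mprod_of_prp {π : Form P A} (h : π.Prp) (M : KModel P A) (U : List (Arrow P A))
    (t : M.World) (o : ℕ) : msat (mprod M U) (t, o) π ↔ msat M t π := by
  induction h with
  | atom p => rfl
  | neg _ ih => exact not_congr ih
  | and _ _ ih₁ ih₂ => exact and_congr ih₁ ih₂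

def mdepth : Form P A → ℕ
  | .neg φ => mdepth φ
  | .and φ ψ => max (mdepth φ) (mdepth ψ)
  | .box _ φ => mdepth φ + 1
  | _ => 0

section Conj
variable [Inhabited P]

theorem msat_top (M : KModel P A) (s : M.World) : msat M s (Form.top : Form P A) := by
  simp [Form.top, msat]

theorem Form.Modal.top : (Form.top : Form P A).Modal :=
  .neg (.and (.atom _) (.neg (.atom _)))

theorem msat_conj (M : KModel P A) (s : M.World) (L : List (Form P A)) :
    msat M s (Form.conj L) ↔ ∀ ψ ∈ L, msat M s ψ := by
  induction L with
  | nil => simpa [Form.conj] using msat_top M s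
  | cons ψ L ih => simp [Form.conj, msat, ih]

theorem Form.Modal.conj {L : List (Form P A)} (h : ∀ ψ ∈ L, ψ.Modal) : (Form.conj L).Modal := by
  induction L with
  | nil => exact .top
  | cons ψ L ih => exact .and (h ψ (by simp)) (ih fun χ hχ => h χ (by simp [hχ]))

theorem mdepth_conj_lt {L : List (Form P A)} {n : ℕ} (hn : 0 < n)
    (h : ∀ ψ ∈ L, mdepth ψ < n) : mdepth (Form.conj L) < n := by
  induction L with
  | nil => simpa [Form.conj, Form.top, mdepth]
  | cons ψ L ih =>
    simp only [Form.conj, mdepth, max_lt_iff]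
    exact ⟨h ψ (by simp), ih fun χ hχ => h χ (by simp [hχ])⟩

end Conj

def ModalDefinable (Q : ∀ M : KModel P A, M.World → Prop) : Prop :=
  ∃ φ : Form P A, φ.Modal ∧ ∀ M s, Q M s ↔ msat M s φ

namespace ModalDefinable

variable {Q Q' : ∀ M : KModel P A, M.World → Prop}

theorem of_modal {φ : Form P A} (h : φ.Modal) : ModalDefinable fun M s => msat M s φ :=
  ⟨φ, h, fun _ _ => Iff.rfl⟩

theorem congr (h : ModalDefinable Q) (hQ : ∀ M s, Q M s ↔ Q' M s) : ModalDefinable Q' :=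
  let ⟨φ, hφ, hQφ⟩ := h
  ⟨φ, hφ, fun M s => (hQ M s).symm.trans (hQφ M s)⟩

theorem not (h : ModalDefinable Q) : ModalDefinable fun M s => ¬ Q M s :=
  let ⟨φ, hφ, hQφ⟩ := h
  ⟨.neg φ, .neg hφ, fun M s => not_congr (hQφ M s)⟩

theorem and (h : ModalDefinable Q) (h' : ModalDefinable Q') :
    ModalDefinable fun M s => Q M s ∧ Q' M s :=
  let ⟨φ, hφ, hQφ⟩ := h
  let ⟨φ', hφ', hQφ'⟩ := h'
  ⟨.and φ φ', .and hφ hφ', fun M s => and_congr (hQφ M s) (hQφ' M s)⟩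

theorem dia (a : A) (h : ModalDefinable Q) : ModalDefinable fun M s => ∃ t, M.R a s t ∧ Q M t :=
  let ⟨φ, hφ, hQφ⟩ := h
  ⟨Form.dia a φ, .neg (.box a (.neg hφ)), fun M s => by simp [Form.dia, msat, hQφ]⟩

variable [Inhabited P]

theorem list_forall {ι : Type*} (L : List ι) {Q : ι → ∀ M : KModel P A, M.World → Prop}
    (h : ∀ i ∈ L, ModalDefinable (Q i)) : ModalDefinable fun M s => ∀ i ∈ L, Q i M s := by
  induction L with
  | nil => exact ⟨Form.top, .top, fun M s => by simpa using msat_top M s⟩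
  | cons i L ih =>
    simp only [List.forall_mem_cons] at h ⊢
    exact h.1.and (ih h.2)

theorem list_exists {ι : Type*} (L : List ι) {Q : ι → ∀ M : KModel P A, M.World → Prop}
    (h : ∀ i ∈ L, ModalDefinable (Q i)) : ModalDefinable fun M s => ∃ i ∈ L, Q i M s :=
  (list_forall L fun i hi => (h i hi).not).not.congr fun M s => by simp

end ModalDefinable

section Reduct
variable [Inhabited P]

open Classical in
noncomputable def updReduct (U : List (Arrow P A)) : ℕ → Form P A → Form P A
  | _, .atom p => .atom p
  | o, .neg φ => .neg (updReduct U o φ)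
  | o, .and φ ψ => .and (updReduct U o φ) (updReduct U o ψ)
  | o, .box a φ => Form.conj ((U.filter fun ar => ar.1 = a ∧ ar.2.1 = o).map fun ar =>
      Form.imp ar.2.2.1 (.box a (Form.imp ar.2.2.2.2 (updReduct U ar.2.2.2.1 φ))))
  | _, φ => φ

theorem Form.Modal.updReduct {U : List (Arrow P A)} (hU : ModalArrows U) {φ : Form P A}
    (h : φ.Modal) (o : ℕ) : (updReduct U o φ).Modal := by
  induction h generalizing o with
  | atom p => exact .atom p
  | neg _ ih => exact .neg (ih o)
  | and _ _ ih₁ ih₂ => exact .and (ih₁ o) (ih₂ o)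
  | box a _ ih =>
    refine .conj fun ψ hψ => ?_
    simp only [List.mem_map, List.mem_filter] at hψ
    obtain ⟨ar, ⟨hmem, -⟩, rfl⟩ := hψ
    exact .neg (.and (hU ar hmem).1 (.neg (.box a (.neg (.and (hU ar hmem).2 (.neg (ih _)))))))

theorem msat_updReduct {U : List (Arrow P A)} {φ : Form P A} (h : φ.Modal) (M : KModel P A)
    (t : M.World) (o : ℕ) : msat M t (updReduct U o φ) ↔ msat (mprod M U) (t, o) φ := by
  induction h generalizing t o with
  | atom p => rfl
  | neg _ ih => exact not_congr (ih t o)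
  | and _ _ ih₁ ih₂ => exact and_congr (ih₁ t o) (ih₂ t o)
  | box a _ ih =>
    simp only [updReduct, msat_conj, List.mem_map, List.mem_filter, decide_eq_true_eq]
    constructor
    · rintro H ⟨u, o'⟩ ⟨hR, σ, τ, hmem, hσ, hτ⟩
      have := H _ ⟨(a, o, σ, o', τ), ⟨hmem, rfl, rfl⟩, rfl⟩
      simp only [Form.imp, msat, not_and, not_not] at this
      exact (ih u o').1 (this hσ u hR hτ)
    · rintro H _ ⟨⟨b, o₁, σ, o', τ⟩, ⟨hmem, rfl, rfl⟩, rfl⟩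
      simp only [Form.imp, msat, not_and, not_not]
      exact fun hσ u hR hτ => (ih u o').2 (H (u, o') ⟨hR, σ, τ, hmem, hσ, hτ⟩)

end Reduct

structure Cube (P A : Type) where
  prp : List (Form P A)
  dia : List (A × Form P A)
  box : List (A × Form P A)

def CubeSat (M : KModel P A) (s : M.World) (c : Cube P A) : Prop :=
  (∀ π ∈ c.prp, msat M s π) ∧
  (∀ q ∈ c.dia, ∃ t, M.R q.1 s t ∧ msat M t q.2) ∧
  (∀ q ∈ c.box, ∀ t, M.R q.1 s t → msat M t q.2)

def Cube.inter (c d : Cube P A) : Cube P A :=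
  ⟨c.prp ++ d.prp, c.dia ++ d.dia, c.box ++ d.box⟩

theorem cubeSat_inter (M : KModel P A) (s : M.World) (c d : Cube P A) :
    CubeSat M s (c.inter d) ↔ CubeSat M s c ∧ CubeSat M s d := by
  simp only [CubeSat, Cube.inter, List.mem_append, or_imp, forall_and]
  tauto

def Cube.Good (c : Cube P A) (n : ℕ) : Prop :=
  (∀ π ∈ c.prp, π.Prp) ∧ ∀ q ∈ c.dia ++ c.box, q.2.Modal ∧ mdepth q.2 < n

theorem Cube.Good.mono {c : Cube P A} {n m : ℕ} (h : c.Good n) (hnm : n ≤ m) : c.Good m :=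
  ⟨h.1, fun q hq => ⟨(h.2 q hq).1, (h.2 q hq).2.trans_le hnm⟩⟩

theorem Cube.Good.inter {c d : Cube P A} {n : ℕ} (hc : c.Good n) (hd : d.Good n) :
    (c.inter d).Good n := by
  simp only [Cube.Good, Cube.inter, List.mem_append, or_imp, forall_and] at *
  tauto

/-- Disjunctive normal forms of `φ` and of `¬φ`, as lists of cubes. -/
def Form.dnf : Form P A → List (Cube P A) × List (Cube P A)
  | .atom p => ([⟨[.atom p], [], []⟩], [⟨[.neg (.atom p)], [], []⟩])
  | .neg φ => φ.dnf.swap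
  | .and φ ψ => (φ.dnf.1.flatMap fun c => ψ.dnf.1.map c.inter, φ.dnf.2 ++ ψ.dnf.2)
  | .box a φ => ([⟨[], [], [(a, φ)]⟩], [⟨[], [(a, .neg φ)], []⟩])
  | _ => ([], [])

theorem Form.Modal.msat_iff_dnf {φ : Form P A} (h : φ.Modal) (M : KModel P A) (s : M.World) :
    (msat M s φ ↔ ∃ c ∈ φ.dnf.1, CubeSat M s c) ∧
      (¬ msat M s φ ↔ ∃ c ∈ φ.dnf.2, CubeSat M s c) := by
  induction h generalizing s with
  | atom p => simp [Form.dnf, CubeSat, msat]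
  | neg _ ih => simpa [Form.dnf, msat] using (ih s).symm
  | and _ _ ih₁ ih₂ =>
    obtain ⟨hp₁, hn₁⟩ := ih₁ s
    obtain ⟨hp₂, hn₂⟩ := ih₂ s
    constructor
    · simp only [Form.dnf, msat, hp₁, hp₂, List.mem_flatMap, List.mem_map]
      constructor
      · rintro ⟨⟨c, hc, hsc⟩, d, hd, hsd⟩
        exact ⟨c.inter d, ⟨c, hc, d, hd, rfl⟩, (cubeSat_inter M s c d).2 ⟨hsc, hsd⟩⟩
      · rintro ⟨_, ⟨c, hc, d, hd, rfl⟩, hs⟩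
        obtain ⟨hsc, hsd⟩ := (cubeSat_inter M s c d).1 hs
        exact ⟨⟨c, hc, hsc⟩, d, hd, hsd⟩
    · simp only [Form.dnf, msat, not_and_or, hn₁, hn₂, List.mem_append, or_and_right, exists_or]
  | box a _ => simp [Form.dnf, CubeSat, msat]

theorem Form.Modal.good_dnf {φ : Form P A} (h : φ.Modal) :
    ∀ c ∈ φ.dnf.1 ++ φ.dnf.2, c.Good (mdepth φ) := by
  induction h with
  | atom p => simp [Form.dnf, Cube.Good, Form.Prp.atom, Form.Prp.neg]
  | neg _ ih => simpa [Form.dnf, mdepth, or_comm] using ih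
  | @and φ ψ _ _ ih₁ ih₂ =>
    have h₁ := fun c hc => (ih₁ c hc).mono (le_max_left (mdepth φ) (mdepth ψ))
    have h₂ := fun c hc => (ih₂ c hc).mono (le_max_right (mdepth φ) (mdepth ψ))
    simp only [List.mem_append, or_imp, forall_and] at h₁ h₂
    simp only [Form.dnf, mdepth, List.mem_append, List.mem_flatMap, List.mem_map]
    rintro c ((⟨c, hc, d, hd, rfl⟩) | hc | hc)
    exacts [(h₁.1 c hc).inter (h₂.1 d hd), h₁.2 c hc, h₂.2 c hc]
  | box a hφ => simp [Form.dnf, Cube.Good, mdepth, hφ, hφ.neg]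

def tag (i x : ℕ) : ℕ := Nat.pair (i + 1) x

theorem tag_ne_zero (i x : ℕ) : tag i x ≠ 0 :=
  (Nat.succ_pos i).trans_le (Nat.left_le_pair _ _) |>.ne'

theorem tag_inj {i j x y : ℕ} : tag i x = tag j y ↔ i = j ∧ x = y := by
  simp [tag, Nat.pair_eq_pair]

def relabel (f : ℕ → ℕ) (U : List (Arrow P A)) : List (Arrow P A) :=
  U.map fun ar => (ar.1, f ar.2.1, ar.2.2.1, f ar.2.2.2.1, ar.2.2.2.2)

theorem mem_relabel {f : ℕ → ℕ} {U : List (Arrow P A)} {b : A} {x y : ℕ} {σ τ : Form P A} :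
    (b, x, σ, y, τ) ∈ relabel f U ↔ ∃ o o', x = f o ∧ y = f o' ∧ (b, o, σ, o', τ) ∈ U := by
  simp only [relabel, List.mem_map, Prod.mk.injEq, Prod.exists]
  constructor
  · rintro ⟨b, o, σ, o', τ, hmem, rfl, rfl, rfl, rfl, rfl⟩
    exact ⟨o, o', rfl, rfl, hmem⟩
  · rintro ⟨o, o', rfl, rfl, hmem⟩
    exact ⟨b, o, σ, o', τ, hmem, rfl, rfl, rfl, rfl, rfl⟩

section Merge
variable [Inhabited P] {k : ℕ} (a : Fin k → A) (U : Fin k → List (Arrow P A)) (o : Fin k → ℕ)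
  (ψ : Fin k → Form P A)

/-- Outcome `0` is a new root; the `i`-th update is copied onto the outcomes `tag i _`, and the
root gets an `a i`-arrow to the copy of `o i` at every world where `ψ i` holds after `U i`. -/
noncomputable def merge : List (Arrow P A) :=
  (List.finRange k).map (fun i => (a i, 0, Form.top, tag i (o i), updReduct (U i) (o i) (ψ i))) ++
    (List.finRange k).flatMap fun i : Fin k => relabel (tag i) (U i)

variable {a U o ψ}

theorem mem_merge {b : A} {x y : ℕ} {σ τ : Form P A} :
    (b, x, σ, y, τ) ∈ merge a U o ψ ↔
      (∃ i : Fin k, b = a i ∧ x = 0 ∧ σ = Form.top ∧ y = tag i (o i) ∧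
        τ = updReduct (U i) (o i) (ψ i)) ∨
      ∃ (i : Fin k) (o₁ o₂ : ℕ), x = tag i o₁ ∧ y = tag i o₂ ∧ (b, o₁, σ, o₂, τ) ∈ U i := by
  simp only [merge, List.mem_append, List.mem_map, List.mem_flatMap, List.mem_finRange,
    true_and, mem_relabel, Prod.mk.injEq]
  exact or_congr (exists_congr fun i => by tauto) Iff.rfl

theorem modalArrows_merge (hU : ∀ i, ModalArrows (U i)) (hψ : ∀ i, (ψ i).Modal) :
    ModalArrows (merge a U o ψ) := by
  rintro ⟨b, x, σ, y, τ⟩ hmem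
  rcases mem_merge.1 hmem with ⟨i, -, -, rfl, -, rfl⟩ | ⟨i, o₁, o₂, -, -, hmem⟩
  · exact ⟨.top, (hψ i).updReduct (hU i) (o i)⟩
  · exact hU i (b, o₁, σ, o₂, τ) hmem

theorem marrowOK_merge_zero {M : KModel P A} {b : A} {y : ℕ} {s u : M.World} :
    marrowOK M (merge a U o ψ) b 0 y s u ↔
      ∃ i : Fin k, b = a i ∧ y = tag i (o i) ∧ msat M u (updReduct (U i) (o i) (ψ i)) := by
  constructor
  · rintro ⟨σ, τ, hmem, -, hτ⟩
    rcases mem_merge.1 hmem with ⟨i, rfl, -, -, rfl, rfl⟩ | ⟨i, o₁, -, h, -⟩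
    · exact ⟨i, rfl, rfl, hτ⟩
    · exact absurd h.symm (tag_ne_zero _ _)
  · rintro ⟨i, rfl, rfl, hu⟩
    exact ⟨_, _, mem_merge.2 (Or.inl ⟨i, rfl, rfl, rfl, rfl, rfl⟩), msat_top M s, hu⟩

theorem marrowOK_merge_tag {M : KModel P A} {b : A} {i : Fin k} {x z : ℕ} {s u : M.World} :
    marrowOK M (merge a U o ψ) b (tag i x) z s u ↔
      ∃ y, z = tag i y ∧ marrowOK M (U i) b x y s u := by
  constructor
  · rintro ⟨σ, τ, hmem, hσ, hτ⟩
    rcases mem_merge.1 hmem with ⟨j, -, h, -⟩ | ⟨j, o₁, y, h, rfl, hmem⟩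
    · exact absurd h (tag_ne_zero _ _)
    · obtain ⟨hij, rfl⟩ := tag_inj.1 h
      obtain rfl := Fin.ext hij
      exact ⟨y, rfl, σ, τ, hmem, hσ, hτ⟩
  · rintro ⟨y, rfl, σ, τ, hmem, hσ, hτ⟩
    exact ⟨σ, τ, mem_merge.2 (Or.inr ⟨i, x, y, rfl, rfl, hmem⟩), hσ, hτ⟩

theorem isBisim_merge (M : KModel P A) (i : Fin k) :
    IsBisim (mprod M (U i)) (mprod M (merge a U o ψ)) fun x y => y = (x.1, tag i x.2) := by
  rintro ⟨t, x⟩ _ rfl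
  refine ⟨fun p => Iff.rfl, ?_, ?_⟩
  · rintro b ⟨u, y⟩ ⟨hR, hok⟩
    exact ⟨(u, tag i y), ⟨hR, marrowOK_merge_tag.2 ⟨y, rfl, hok⟩⟩, rfl⟩
  · rintro b ⟨u, z⟩ ⟨hR, hok⟩
    obtain ⟨y, rfl, hok⟩ := marrowOK_merge_tag.1 hok
    exact ⟨(u, y), ⟨hR, hok⟩, rfl⟩

end Merge

theorem Form.Prp.modal {π : Form P A} (h : π.Prp) : π.Modal := by
  induction h with
  | atom p => exact .atom p
  | neg _ ih => exact .neg ih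
  | and _ _ ih₁ ih₂ => exact .and ih₁ ih₂

theorem exSat_iff_exists_cube {φ : Form P A} (h : φ.Modal) (M : KModel P A) (s : M.World) :
    ExSat M s φ ↔ ∃ c ∈ φ.dnf.1, ∃ U o, ModalArrows U ∧ CubeSat (mprod M U) (s, o) c := by
  simp only [ExSat, fun U o => (h.msat_iff_dnf (mprod M U) (s, o)).1]
  exact ⟨fun ⟨U, o, hU, c, hc, hs⟩ => ⟨c, hc, U, o, hU, hs⟩,
    fun ⟨c, hc, U, o, hU, hs⟩ => ⟨U, o, hU, c, hc, hs⟩⟩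

section Reduction
variable [Inhabited P]

open Classical in
noncomputable def Cube.boxConj (c : Cube P A) (a : A) : Form P A :=
  Form.conj ((c.box.filter fun q => q.1 = a).map Prod.snd)

theorem msat_boxConj (M : KModel P A) (s : M.World) (c : Cube P A) (a : A) :
    msat M s (c.boxConj a) ↔ ∀ q ∈ c.box, q.1 = a → msat M s q.2 := by
  simp only [Cube.boxConj, msat_conj, List.mem_map, List.mem_filter, decide_eq_true_eq]
  exact ⟨fun H q hq ha => H q.2 ⟨q, ⟨hq, ha⟩, rfl⟩, fun H _ ⟨q, ⟨hq, ha⟩, hψ⟩ => hψ ▸ H q hq ha⟩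

theorem Form.Modal.boxConj {c : Cube P A} (h : ∀ q ∈ c.box, q.2.Modal) (a : A) :
    (c.boxConj a).Modal :=
  .conj fun ψ hψ => by
    simp only [List.mem_map, List.mem_filter] at hψ
    obtain ⟨q, ⟨hq, -⟩, rfl⟩ := hψ
    exact h q hq

theorem mdepth_boxConj_lt {c : Cube P A} {n : ℕ} (hn : 0 < n) (h : ∀ q ∈ c.box, mdepth q.2 < n)
    (a : A) : mdepth (c.boxConj a) < n :=
  mdepth_conj_lt hn fun ψ hψ => by
    simp only [List.mem_map, List.mem_filter] at hψ
    obtain ⟨q, ⟨hq, -⟩, rfl⟩ := hψ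
    exact h q hq

theorem exists_cubeSat_mprod_iff {c : Cube P A} (hprp : ∀ π ∈ c.prp, π.Prp)
    (hdia : ∀ q ∈ c.dia, q.2.Modal) (hbox : ∀ q ∈ c.box, q.2.Modal) (M : KModel P A)
    (s : M.World) :
    (∃ U o, ModalArrows U ∧ CubeSat (mprod M U) (s, o) c) ↔
      (∀ π ∈ c.prp, msat M s π) ∧
        ∀ q ∈ c.dia, ∃ t, M.R q.1 s t ∧ ExSat M t (.and q.2 (c.boxConj q.1)) := by
  constructor
  · rintro ⟨U, o, hU, hπ, hdiaSat, hboxSat⟩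
    refine ⟨fun π hπ' => (msat_mprod_of_prp (hprp π hπ') M U s o).1 (hπ π hπ'), fun q hq => ?_⟩
    obtain ⟨⟨t, o'⟩, hR, ht⟩ := hdiaSat q hq
    exact ⟨t, hR.1, U, o', hU, ht,
      (msat_boxConj _ _ _ _).2 fun q' hq' hq'a => hboxSat q' hq' _ (hq'a ▸ hR)⟩
  · rintro ⟨hπ, hex⟩
    simp only [ExSat] at hex
    choose t hR U o hU hsat using fun i : Fin c.dia.length => hex c.dia[i] (List.getElem_mem _)
    set ψ := fun i : Fin c.dia.length => Form.and c.dia[i].2 (c.boxConj c.dia[i].1)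
    have hψ : ∀ i, (ψ i).Modal := fun i =>
      .and (hdia _ (List.getElem_mem _)) (.boxConj hbox _)
    refine ⟨merge (fun i => c.dia[i].1) U o ψ, 0, modalArrows_merge hU hψ,
      fun π hπ' => (msat_mprod_of_prp (hprp π hπ') M _ s 0).2 (hπ π hπ'), ?_, ?_⟩
    · intro q hq
      obtain ⟨i, hi, rfl⟩ := List.mem_iff_getElem.1 hq
      refine ⟨(t ⟨i, hi⟩, tag i (o ⟨i, hi⟩)), ⟨hR ⟨i, hi⟩, marrowOK_merge_zero.2
        ⟨⟨i, hi⟩, rfl, rfl, (msat_updReduct (hψ _) M _ _).2 (hsat _)⟩⟩, ?_⟩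
      exact (msat_iff_of_isBisim (isBisim_merge M ⟨i, hi⟩) (hdia _ hq) rfl).1 (hsat _).1
    · rintro q hq ⟨u, y⟩ ⟨-, hok⟩
      obtain ⟨i, hqi, rfl, hu⟩ := marrowOK_merge_zero.1 hok
      have hψu := (msat_updReduct (hψ i) M u (o i)).1 hu
      exact (msat_iff_of_isBisim (isBisim_merge M i) (hbox q hq) rfl).1
        ((msat_boxConj _ _ _ _).1 hψu.2 q hq hqi)

theorem modalDefinable_exSat {φ : Form P A} (h : φ.Modal) :
    ModalDefinable fun M s => ExSat M s φ := by
  induction hd : mdepth φ using Nat.strong_induction_on generalizing φ with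
  | _ n ih =>
  refine (ModalDefinable.list_exists _ fun c hc => ?_).congr
    fun M s => (exSat_iff_exists_cube h M s).symm
  obtain ⟨hprp, hmod⟩ := h.good_dnf c (List.mem_append_left _ hc)
  simp only [hd, List.mem_append, or_imp, forall_and] at hmod
  obtain ⟨⟨hdia, hbox⟩, hdiaDepth, hboxDepth⟩ := hmod
  refine ((ModalDefinable.list_forall _ fun π hπ => .of_modal (hprp π hπ).modal).and
    (ModalDefinable.list_forall _ fun q hq => .dia q.1 (ih _ ?_ ?_ rfl))).congr
    fun M s => (exists_cubeSat_mprod_iff hprp hdia hbox M s).symm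
  · have hq' := hdiaDepth q hq
    exact max_lt hq' (mdepth_boxConj_lt (Nat.zero_lt_of_lt hq') hboxDepth _)
  · exact .and (hdia q hq) (.boxConj hbox _)

end Reduction

/-- for every basic modal formula `φ` there is a basic modal formula
`φ'` such that `⟨↑⟩φ ↔ φ'` is valid. -/
theorem ex_reduction (P A : Type) (φ : Form P A) (h : φ.Modal) :
    ∃ φ' : Form P A, φ'.Modal ∧
      ∀ (M : KModel P A) (s : M.World),
        Form.sat M s (Form.ex φ) ↔ Form.sat M s φ' := by
  have : Inhabited P := Classical.inhabited_of_nonempty h.nonempty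
  obtain ⟨φ', hφ', hiff⟩ := modalDefinable_exSat h
  exact ⟨φ', hφ', fun M s =>
    (sat_ex_iff h M s).trans ((hiff M s).trans (sat_iff_msat hφ' M s).symm)⟩

end AAUML
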